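/- Let k_1 < … < k_ℓ be natural numbers and U_λ = { Wr[H_{k_1}, …, H_{k_ℓ}, p] : p a polynomial with complex coefficients }. Then the set of natural numbers that do not occur as the degree of a nonzero element of U_λ is finite of cardinality exactly |λ| = (Σ_{i=1}^{ℓ} k_i) − ℓ(ℓ−1)/2; that is, the codimension of U_λ in the space of all polynomials is |λ|. -/

import Mathlib

open Polynomial MeasureTheory

/-- The physicists' Hermite polynomials: `H 0 = 1`, `H (n+1) = 2X * H n - (H n)'`. -/
noncomputable def pHermite (R : Type*) [CommRing R] : ℕ → Polynomial R
  | 0 => 1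
  | n + 1 => 2 * X * pHermite R n - derivative (pHermite R n)

/-- The Wronskian determinant of a finite family of polynomials. -/
noncomputable def polyWronskian {R : Type*} [CommRing R] {n : ℕ}
    (f : Fin n → Polynomial R) : Polynomial R :=
  (Matrix.of fun i j : Fin n => (⇑(derivative (R := R)))^[(i : ℕ)] (f j)).det

/-!
The map `p ↦ Wr[H_{k₁}, …, H_{k_ℓ}, p]` is linear and kills the span of the `H_{kᵢ}`, so every
nonzero value is `Wr[H_{k₁}, …, H_{k_ℓ}, q]` with `m := deg q ∉ {kᵢ}`. For polynomials `f_j` of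
pairwise distinct degrees `d_j` the Wronskian has degree `∑ d_j - (0 + 1 + ⋯ + ℓ)`: its coefficient
there is `∏ lc(f_j)` times `det (d_j (d_j - 1) ⋯ (d_j - i + 1))_{i,j}`, a Vandermonde determinant in
the `d_j` after a unitriangular change of basis. So the attained degrees are `m + c` for `m ∉ {kᵢ}`,
where `c = ∑ kᵢ - ℓ(ℓ+1)/2`, and these leave exactly `ℓ + c = ∑ kᵢ - ℓ(ℓ-1)/2` gaps.
-/

open Finset

section Hermite

variable (R : Type*) [CommRing R]

theorem natDegree_pHermite_le (n : ℕ) : (pHermite R n).natDegree ≤ n := by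
  induction n with
  | zero => simp [pHermite]
  | succ n ih =>
    refine (natDegree_sub_le _ _).trans (max_le ?_ ((natDegree_derivative_le _).trans (by omega)))
    refine natDegree_mul_le.trans ?_
    grw [natDegree_mul_le, ih, natDegree_X_le]
    simp [add_comm]

theorem coeff_pHermite_self (n : ℕ) : (pHermite R n).coeff n = 2 ^ n := by
  induction n with
  | zero => simp [pHermite]
  | succ n ih =>
    have hder : (derivative (pHermite R n)).coeff (n + 1) = 0 :=
      coeff_eq_zero_of_natDegree_lt ((natDegree_derivative_le _).trans_lt
        (by have := natDegree_pHermite_le R n; omega))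
    rw [pHermite, coeff_sub, hder, sub_zero, mul_assoc, coeff_ofNat_mul, coeff_X_mul, ih, pow_succ']

variable [NoZeroDivisors R] [CharZero R]

theorem natDegree_pHermite (n : ℕ) : (pHermite R n).natDegree = n :=
  natDegree_eq_of_le_of_coeff_ne_zero (natDegree_pHermite_le R n)
    (by simp [coeff_pHermite_self])

theorem pHermite_ne_zero (n : ℕ) : pHermite R n ≠ 0 := fun h =>
  pow_ne_zero n two_ne_zero <| by simpa [h] using (coeff_pHermite_self R n).symm

end Hermite

theorem Polynomial.coeff_prod_sum_of_natDegree_le {R ι : Type*} [CommSemiring R] (s : Finset ι)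
    (f : ι → R[X]) (e : ι → ℕ) (h : ∀ i ∈ s, (f i).natDegree ≤ e i) :
    (∏ i ∈ s, f i).coeff (∑ i ∈ s, e i) = ∏ i ∈ s, (f i).coeff (e i) := by
  induction s using Finset.cons_induction with
  | empty => simp
  | cons a s ha ih =>
    simp only [forall_mem_cons] at h
    rw [prod_cons, sum_cons, prod_cons, coeff_mul_add_eq_of_natDegree_le h.1
      ((natDegree_prod_le _ _).trans (sum_le_sum h.2)), ih h.2]

theorem Fin.sum_val_le_sum_of_injective {n : ℕ} {d : Fin n → ℕ} (hd : Function.Injective d) :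
    ∑ i : Fin n, (i : ℕ) ≤ ∑ i, d i := by
  have hd' : Function.Injective fun i => (d i : ℤ) := Nat.cast_injective.comp hd
  have h := Finset.sum_range_le_sum (s := univ.image fun i => (d i : ℤ)) (c := 0) (by simp)
  rw [card_image_of_injective univ hd', card_univ, Fintype.card_fin,
    sum_image fun i _ j _ hij => hd' hij, ← Fin.sum_univ_eq_sum_range] at h
  simpa only [zero_add, ← Nat.cast_sum, Nat.cast_le] using h

section Wronskian

variable {R : Type*} [CommRing R] {n : ℕ}

theorem polyWronskian_eq_sum (f : Fin n → R[X]) :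
    polyWronskian f = ∑ σ : Equiv.Perm (Fin n),
      Equiv.Perm.sign σ • ∏ j, derivative^[σ j] (f j) := by
  rw [polyWronskian, Matrix.det_apply]
  rfl

theorem polyWronskian_eq_zero_of_eq {f : Fin n → R[X]} {i j : Fin n} (hij : i ≠ j)
    (h : f i = f j) : polyWronskian f = 0 :=
  Matrix.det_zero_of_column_eq hij fun _ => by simp [h]

noncomputable def derivativeColumn (m : ℕ) : R[X] →ₗ[R] Fin m → R[X] :=
  LinearMap.pi fun i => derivative ^ (i : ℕ)

theorem polyWronskian_eq_detRowAlternating (f : Fin n → R[X]) :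
    polyWronskian f = Matrix.detRowAlternating fun j => derivativeColumn n (f j) := by
  rw [polyWronskian, ← Matrix.det_transpose]
  congr 1
  funext j i
  simp [derivativeColumn, Module.End.pow_apply]

noncomputable def polyWronskianSnoc (g : Fin n → R[X]) : R[X] →ₗ[R] R[X] :=
  (Matrix.detRowAlternating.toMultilinearMap.toLinearMap
    (Fin.snoc (fun j => derivativeColumn (n + 1) (g j)) 0) (Fin.last n)).restrictScalars R ∘ₗ
    derivativeColumn (n + 1)

theorem polyWronskianSnoc_apply (g : Fin n → R[X]) (p : R[X]) :
    polyWronskianSnoc g p = polyWronskian (Fin.snoc g p) := by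
  rw [polyWronskian_eq_detRowAlternating]
  simp only [polyWronskianSnoc, LinearMap.coe_comp, LinearMap.coe_restrictScalars,
    Function.comp_apply, MultilinearMap.toLinearMap_apply, Fin.update_snoc_last,
    AlternatingMap.coe_multilinearMap]
  exact congrArg _ (Fin.comp_snoc _ g p).symm

theorem span_range_le_ker_polyWronskianSnoc (g : Fin n → R[X]) :
    Submodule.span R (Set.range g) ≤ LinearMap.ker (polyWronskianSnoc g) :=
  Submodule.span_le.mpr <| Set.range_subset_iff.mpr fun i => by
    rw [SetLike.mem_coe, LinearMap.mem_ker, polyWronskianSnoc_apply]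
    exact polyWronskian_eq_zero_of_eq (Fin.castSucc_lt_last i).ne (by simp)

theorem polyWronskian_snoc_sub_of_mem_span {g : Fin n → R[X]} {r : R[X]}
    (hr : r ∈ Submodule.span R (Set.range g)) (p : R[X]) :
    polyWronskian (Fin.snoc g (p - r)) = polyWronskian (Fin.snoc g p) := by
  rw [← polyWronskianSnoc_apply, ← polyWronskianSnoc_apply, map_sub,
    span_range_le_ker_polyWronskianSnoc g hr, sub_zero]

theorem natDegree_prod_iterate_derivative_le_and_coeff {ι : Type*} [Fintype ι] (f : ι → R[X])
    (s : ι → ℕ) {e : ℕ} (he : e + ∑ j, s j = ∑ j, (f j).natDegree) :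
    (∏ j, derivative^[s j] (f j)).natDegree ≤ e ∧
      (∏ j, derivative^[s j] (f j)).coeff e =
        ∏ j, ((f j).natDegree.descFactorial (s j) * (f j).leadingCoeff) := by
  by_cases hs : ∀ j, s j ≤ (f j).natDegree
  · have hsum : ∑ j, ((f j).natDegree - s j) = e := by
      rw [sum_tsub_distrib _ fun j _ => hs j]
      omega
    refine ⟨hsum ▸ (natDegree_prod_le _ _).trans
      (sum_le_sum fun j _ => natDegree_iterate_derivative _ _), ?_⟩
    rw [← hsum, coeff_prod_sum_of_natDegree_le _ _ _ fun j _ => natDegree_iterate_derivative _ _]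
    refine prod_congr rfl fun j _ => ?_
    rw [coeff_iterate_derivative, Nat.sub_add_cancel (hs j), nsmul_eq_mul, leadingCoeff]
  · obtain ⟨j, hj⟩ := not_forall.mp hs
    have hzero : derivative^[s j] (f j) = 0 := iterate_derivative_eq_zero (not_le.mp hj)
    rw [prod_eq_zero (mem_univ j) hzero, prod_eq_zero (mem_univ j)
      (by rw [Nat.descFactorial_eq_zero_iff_lt.mpr (not_le.mp hj), Nat.cast_zero, zero_mul])]
    simp

theorem natDegree_polyWronskian_le_and_coeff (f : Fin n → R[X]) {e : ℕ}
    (he : e + ∑ i : Fin n, (i : ℕ) = ∑ j, (f j).natDegree) :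
    (polyWronskian f).natDegree ≤ e ∧
      (polyWronskian f).coeff e = (∏ j, (f j).leadingCoeff) *
        (Matrix.of fun i j : Fin n => ((f j).natDegree.descFactorial i : R)).det := by
  have hterm (σ : Equiv.Perm (Fin n)) := natDegree_prod_iterate_derivative_le_and_coeff f
    (fun j => σ j) (e := e) (by rw [Equiv.sum_comp σ (fun i : Fin n => (i : ℕ)), he])
  rw [polyWronskian_eq_sum]
  refine ⟨natDegree_sum_le_of_forall_le _ _ fun σ _ =>
    (natDegree_smul_le _ _).trans (hterm σ).1, ?_⟩
  rw [finsetSum_coeff, Matrix.det_apply, mul_sum]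
  refine sum_congr rfl fun σ _ => ?_
  rw [coeff_smul, (hterm σ).2, prod_mul_distrib, Units.smul_def, Units.smul_def, zsmul_eq_mul,
    zsmul_eq_mul]
  simp only [Matrix.of_apply]
  ring

end Wronskian

section WronskianDegree

variable {R : Type*} [CommRing R] [IsDomain R] [CharZero R] {n : ℕ}

theorem det_descFactorial_ne_zero {d : Fin n → ℕ} (hd : Function.Injective d) :
    (Matrix.of fun i j : Fin n => ((d j).descFactorial i : R)).det ≠ 0 := by
  have hvandermonde := Matrix.det_eval_matrixOfPolynomials_eq_det_vandermonde
    (fun j => (d j : R)) (fun i => descPochhammer R i) (descPochhammer_natDegree R ·)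
    (monic_descPochhammer R ·)
  simp only [descPochhammer_eval_eq_descFactorial] at hvandermonde
  rw [← Matrix.det_transpose]
  exact hvandermonde ▸ Matrix.det_vandermonde_ne_zero_iff.mpr (Nat.cast_injective.comp hd)

theorem polyWronskian_ne_zero_and_natDegree_add {f : Fin n → R[X]} (hf : ∀ j, f j ≠ 0)
    (hd : Function.Injective fun j => (f j).natDegree) :
    polyWronskian f ≠ 0 ∧
      (polyWronskian f).natDegree + ∑ i : Fin n, (i : ℕ) = ∑ j, (f j).natDegree := by
  obtain ⟨e, he⟩ := Nat.exists_eq_add_of_le' (Fin.sum_val_le_sum_of_injective hd)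
  obtain ⟨hle, hcoeff⟩ := natDegree_polyWronskian_le_and_coeff f he.symm
  have hne : (polyWronskian f).coeff e ≠ 0 := by
    rw [hcoeff]
    exact mul_ne_zero (prod_ne_zero_iff.mpr fun j _ => leadingCoeff_ne_zero.mpr (hf j))
      (det_descFactorial_ne_zero hd)
  refine ⟨fun h => hne (by rw [h, coeff_zero]), ?_⟩
  rw [le_antisymm hle (le_natDegree_of_ne_zero hne), he]

end WronskianDegree

theorem Polynomial.exists_sub_mem_span_natDegree_notMem {K ι : Type*} [Field K] {g : ι → K[X]}
    (hg : ∀ i, g i ≠ 0) (p : K[X]) :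
    ∃ r ∈ Submodule.span K (Set.range g),
      p - r = 0 ∨ (p - r).natDegree ∉ Set.range fun i => (g i).natDegree := by
  induction hN : p.natDegree using Nat.strong_induction_on generalizing p with
  | _ N ih =>
  by_cases hdeg : p ≠ 0 ∧ p.natDegree ∈ Set.range fun i => (g i).natDegree
  swap
  · exact ⟨0, zero_mem _, by rw [sub_zero]; tauto⟩
  obtain ⟨hp, i, hi⟩ := hdeg
  set c := p.leadingCoeff / (g i).leadingCoeff
  have hc : c ≠ 0 := div_ne_zero (leadingCoeff_ne_zero.mpr hp) (leadingCoeff_ne_zero.mpr (hg i))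
  have hq : C c * g i ∈ Submodule.span K (Set.range g) :=
    smul_eq_C_mul c ▸ Submodule.smul_mem _ c (Submodule.subset_span ⟨i, rfl⟩)
  have hlt : (p - C c * g i).degree < p.degree := by
    refine degree_sub_lt_left ?_ hp ?_
    · rw [degree_C_mul hc, degree_eq_natDegree hp, degree_eq_natDegree (hg i), ← hi]
    · rw [leadingCoeff_mul, leadingCoeff_C,
        div_mul_cancel₀ _ (leadingCoeff_ne_zero.mpr (hg i))]
  by_cases hpq : p - C c * g i = 0
  · exact ⟨_, hq, .inl hpq⟩
  obtain ⟨r, hr, hres⟩ := ih _ (hN ▸ natDegree_lt_natDegree hpq hlt) _ rfl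
  exact ⟨_, add_mem hq hr, by rwa [sub_add_eq_sub_sub]⟩

theorem Fin.natCast_sum_val (n : ℕ) : ((∑ i : Fin n, (i : ℕ) : ℕ) : ℤ) = n * (n - 1) / 2 := by
  have h := Finset.sum_range_id_mul_two n
  rw [← Fin.sum_univ_eq_sum_range (fun i => i)] at h
  rcases n with _ | n
  · simp
  refine (Int.ediv_eq_of_eq_mul_left two_ne_zero ?_).symm
  rw [Nat.add_sub_cancel] at h
  have h' : ((∑ i : Fin (n + 1), (i : ℕ) : ℕ) : ℤ) * 2 = (n + 1) * n := by exact_mod_cast h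
  rw [h']
  push_cast
  ring

theorem ncard_setOf_not_exists_notMem_add_eq {K : Finset ℕ} {a b : ℕ}
    (h : ∀ m ∉ K, b ≤ a + m) :
    {n : ℕ | ¬∃ m ∉ K, n + b = a + m}.Finite ∧
      {n : ℕ | ¬∃ m ∉ K, n + b = a + m}.ncard + b = a + #K := by
  obtain ⟨N, hKN⟩ : ∃ N, ∀ m ∈ K, m < N :=
    ⟨K.sup id + 1, fun m hm => Nat.lt_succ_of_le (le_sup (f := id) hm)⟩
  have hN : b ≤ a + N := h N fun hm => (hKN N hm).false
  have hcard : #K ≤ N := by simpa using card_le_card fun m hm => mem_range.mpr (hKN m hm)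
  -- every `n ≥ a + N - b` is attained, by `m := n + b - a ≥ N`
  set D := (range N \ K).image fun m => a + m - b
  have hset : {n : ℕ | ¬∃ m ∉ K, n + b = a + m} = ↑(range (a + N - b) \ D) := by
    ext n
    simp only [Set.mem_ofPred_eq, D, coe_sdiff, coe_range, coe_image, Set.mem_sdiff, Set.mem_Iio,
      Set.mem_image, mem_coe, not_exists, not_and]
    constructor
    · intro hM
      refine ⟨?_, fun m hm hmn => hM m hm.2 (by have := h m hm.2; omega)⟩
      by_contra hn
      exact hM (n + b - a) (fun hm => by have := hKN _ hm; omega) (by omega)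
    · rintro ⟨hn, hD⟩ m hm hnm
      exact hD m ⟨by omega, hm⟩ (by omega)
  have hinj : Set.InjOn (fun m => a + m - b) ↑(range N \ K) := fun m hm m' hm' hmm' => by
    have := h m (mem_sdiff.mp hm).2
    have := h m' (mem_sdiff.mp hm').2
    simp only at hmm'
    omega
  have hDsub : D ⊆ range (a + N - b) := fun n hn => by
    obtain ⟨m, hm, rfl⟩ := mem_image.mp hn
    have := h m (mem_sdiff.mp hm).2
    have := mem_range.mp (mem_sdiff.mp hm).1
    exact mem_range.mpr (by omega)
  have hDcard : #D = N - #K := by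
    rw [card_image_of_injOn hinj, card_sdiff_of_subset fun m hm => mem_range.mpr (hKN m hm),
      card_range]
  have := card_le_card hDsub
  rw [hset, Set.ncard_coe_finset, card_sdiff_of_subset hDsub, card_range]
  refine ⟨finite_toSet _, ?_⟩
  rw [card_range, hDcard] at this
  omega

section HermiteWronskian

variable {R : Type*} [CommRing R] [IsDomain R] [CharZero R] {ℓ : ℕ} {k : Fin ℓ → ℕ}

theorem polyWronskian_snoc_pHermite (hk : Function.Injective k) {q : R[X]} (hq : q ≠ 0)
    (hqk : q.natDegree ∉ Set.range k) :
    polyWronskian (Fin.snoc (fun i => pHermite R (k i)) q) ≠ 0 ∧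
      (polyWronskian (Fin.snoc (fun i => pHermite R (k i)) q)).natDegree +
        ∑ i : Fin (ℓ + 1), (i : ℕ) = ∑ i, k i + q.natDegree := by
  set f : Fin (ℓ + 1) → R[X] := Fin.snoc (fun i => pHermite R (k i)) q with hf
  have hdeg : (fun j => (f j).natDegree) = Fin.snoc k q.natDegree := by
    rw [← Function.comp_def natDegree f, hf, Fin.comp_snoc]
    simp only [Function.comp_def, natDegree_pHermite]
  have hne (j : Fin (ℓ + 1)) : f j ≠ 0 := by
    induction j using Fin.lastCases with
    | last => simpa [hf] using hq
    | cast i => simpa [hf] using pHermite_ne_zero R (k i)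
  have := polyWronskian_ne_zero_and_natDegree_add hne
    (hdeg ▸ Fin.snoc_injective_of_injective hk hqk)
  rwa [hdeg, Fin.sum_snoc] at this

end HermiteWronskian

theorem exists_polyWronskian_snoc_pHermite_natDegree_eq_iff {K : Type*} [Field K] [CharZero K]
    {ℓ : ℕ} {k : Fin ℓ → ℕ} (hk : Function.Injective k) (n : ℕ) :
    (∃ p : K[X], polyWronskian (Fin.snoc (fun i => pHermite K (k i)) p) ≠ 0 ∧
        (polyWronskian (Fin.snoc (fun i => pHermite K (k i)) p)).natDegree = n) ↔
      ∃ m ∉ Set.range k, n + ∑ i : Fin (ℓ + 1), (i : ℕ) = ∑ i, k i + m := by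
  constructor
  · rintro ⟨p, hW, rfl⟩
    obtain ⟨r, hr, hpr⟩ :=
      exists_sub_mem_span_natDegree_notMem (fun i => pHermite_ne_zero K (k i)) p
    rw [← polyWronskian_snoc_sub_of_mem_span hr] at hW ⊢
    have hpr0 : p - r ≠ 0 := fun h0 => hW (by
      rw [h0, ← polyWronskianSnoc_apply, map_zero])
    simp only [natDegree_pHermite, or_iff_right hpr0] at hpr
    exact ⟨_, hpr, (polyWronskian_snoc_pHermite hk hpr0 hpr).2⟩
  · rintro ⟨m, hm, hnm⟩
    have hX : ((X : K[X]) ^ m).natDegree = m := natDegree_X_pow m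
    obtain ⟨hW, hdeg⟩ :=
      polyWronskian_snoc_pHermite hk (pow_ne_zero m X_ne_zero) (hX ▸ hm : _ ∉ Set.range k)
    exact ⟨_, hW, by omega⟩

theorem stmt11 (ℓ : ℕ) (k : Fin ℓ → ℕ) (hk : StrictMono k) :
    ∀ U : Set (Polynomial ℂ),
      U = {u : Polynomial ℂ | ∃ p : Polynomial ℂ,
            u = polyWronskian (Fin.snoc (fun i => pHermite ℂ (k i)) p)} →
      {n : ℕ | ¬∃ u ∈ U, u ≠ 0 ∧ u.natDegree = n}.Finite ∧
      ({n : ℕ | ¬∃ u ∈ U, u ≠ 0 ∧ u.natDegree = n}.ncard : ℤ)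
        = (∑ i : Fin ℓ, (k i : ℤ)) - (ℓ : ℤ) * ((ℓ : ℤ) - 1) / 2 := by
  rintro U rfl
  have hset : {n : ℕ | ¬∃ u ∈ {u : ℂ[X] | ∃ p : ℂ[X],
        u = polyWronskian (Fin.snoc (fun i => pHermite ℂ (k i)) p)}, u ≠ 0 ∧ u.natDegree = n} =
      {n : ℕ | ¬∃ m ∉ univ.image k, n + ∑ i : Fin (ℓ + 1), (i : ℕ) = ∑ i, k i + m} := by
    ext n
    simpa using (exists_polyWronskian_snoc_pHermite_natDegree_eq_iff (K := ℂ) hk.injective n).not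
  have hbound (m : ℕ) (hm : m ∉ univ.image k) : ∑ i : Fin (ℓ + 1), (i : ℕ) ≤ ∑ i, k i + m := by
    simpa [Fin.sum_snoc] using Fin.sum_val_le_sum_of_injective
      (Fin.snoc_injective_of_injective hk.injective (by simpa using hm))
  obtain ⟨hfin, hcard⟩ := ncard_setOf_not_exists_notMem_add_eq hbound
  rw [hset, ← Fin.natCast_sum_val, ← Nat.cast_sum]
  refine ⟨hfin, ?_⟩
  rw [card_image_of_injective _ hk.injective, card_univ, Fintype.card_fin] at hcard
  have hsum : ∑ i : Fin (ℓ + 1), (i : ℕ) = ∑ i : Fin ℓ, (i : ℕ) + ℓ := by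
    simp [Fin.sum_univ_castSucc]
  omega
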